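/- Let g be a smooth function on [1,R] with g(R) = g'(R) = 0 and g''(R) ≠ 0. Then ∫₁ᴿ r^{2ζ} g(r) dr = (R^{2ζ+3} g''(R)/(8ζ³))·(1 + o(1)) as ζ → ∞. -/

import Mathlib

open Filter intervalIntegral
open scoped ContDiff

lemma ibp_aux (R : ℝ) (hR : 1 < R) (p q : ℝ) (hq : p + 1 = q) (hq0 : q ≠ 0)
    (f : ℝ → ℝ) (hf : ContDiff ℝ ∞ f) :
    ∫ r in (1:ℝ)..R, r ^ p * f r
      = f R * (R ^ q / q) - f 1 * (1 / q)
        - q⁻¹ * ∫ r in (1:ℝ)..R, r ^ q * deriv f r := by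
  subst hq
  have huIcc : Set.uIcc (1:ℝ) R = Set.Icc 1 R := Set.uIcc_of_le hR.le
  have hpos : ∀ x ∈ Set.uIcc (1:ℝ) R, (0:ℝ) < x := by
    intro x hx; rw [huIcc] at hx; linarith [hx.1]
  have hv : ∀ x ∈ Set.uIcc (1:ℝ) R,
      HasDerivAt (fun r : ℝ => r ^ (p+1) / (p+1)) (x ^ p) x := by
    intro x hx
    have h := (Real.hasDerivAt_rpow_const (x := x) (p := p+1)
      (Or.inl (hpos x hx).ne')).div_const (p+1)
    rw [add_sub_cancel_right, mul_comm, mul_div_assoc, div_self hq0, mul_one] at h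
    exact h
  have hu : ∀ x ∈ Set.uIcc (1:ℝ) R, HasDerivAt f (deriv f x) x :=
    fun x _ => (hf.differentiable (by simp) x).hasDerivAt
  have hu' : IntervalIntegrable (deriv f) MeasureTheory.volume 1 R :=
    (hf.continuous_deriv (by exact_mod_cast le_top)).intervalIntegrable 1 R
  have hcont : ∀ s : ℝ, ContinuousOn (fun x : ℝ => x ^ s) (Set.uIcc (1:ℝ) R) := by
    intro s
    exact ContinuousOn.rpow_const continuousOn_id (fun x hx => Or.inl (hpos x hx).ne')
  have hv' : IntervalIntegrable (fun x : ℝ => x ^ p) MeasureTheory.volume 1 R :=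
    (hcont p).intervalIntegrable
  have key := integral_mul_deriv_eq_deriv_mul hu hv hu' hv'
  calc ∫ r in (1:ℝ)..R, r ^ p * f r = ∫ r in (1:ℝ)..R, f r * r ^ p := by
        simp [mul_comm]
    _ = f R * (R ^ (p+1) / (p+1)) - f 1 * ((1:ℝ) ^ (p+1) / (p+1))
        - ∫ r in (1:ℝ)..R, deriv f r * (r ^ (p+1) / (p+1)) := key
    _ = f R * (R ^ (p+1) / (p+1)) - f 1 * (1 / (p+1))
        - (p+1)⁻¹ * ∫ r in (1:ℝ)..R, r ^ (p+1) * deriv f r := by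
        rw [Real.one_rpow, ← intervalIntegral.integral_const_mul]
        congr 1
        apply intervalIntegral.integral_congr
        intro x _
        ring

theorem stmt10 (R : ℝ) (hR : 1 < R) (g : ℝ → ℝ) (hg : ContDiff ℝ (⊤ : ℕ∞) g)
    (h0 : g R = 0) (h1 : deriv g R = 0) (h2 : deriv (deriv g) R ≠ 0) :
    Tendsto
      (fun ζ : ℝ =>
        (∫ r in (1 : ℝ)..R, r ^ (2 * ζ) * g r) /
          (R ^ (2 * ζ + 3) * deriv (deriv g) R / (8 * ζ ^ 3)))
      atTop (nhds 1) := by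
  have hg' : ContDiff ℝ ∞ g := hg.of_le (by simp)
  have hg1 : ContDiff ℝ ∞ (deriv g) := (contDiff_infty_iff_deriv.mp hg').2
  have hg2 : ContDiff ℝ ∞ (deriv (deriv g)) := (contDiff_infty_iff_deriv.mp hg1).2
  have hg3c : Continuous (deriv (deriv (deriv g))) :=
    ((contDiff_infty_iff_deriv.mp hg2).2).continuous
  have hR0 : (0:ℝ) < R := by linarith
  have hlogR : 0 < Real.log R := Real.log_pos hR
  have hPpos : ∀ ζ : ℝ, 0 < R ^ (2 * ζ + 3) := fun ζ => Real.rpow_pos_of_pos hR0 _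
  have hlin : ∀ k : ℝ, Tendsto (fun ζ : ℝ => 2 * ζ + k) atTop atTop :=
    fun k => tendsto_atTop_add_const_right _ k (Tendsto.const_mul_atTop two_pos tendsto_id)
  -- 2ζ/(2ζ+k) → 1
  have hA : ∀ k : ℝ, Tendsto (fun ζ : ℝ => 2 * ζ / (2 * ζ + k)) atTop (nhds 1) := by
    intro k
    have h0' : Tendsto (fun ζ : ℝ => k / (2 * ζ + k)) atTop (nhds 0) :=
      tendsto_const_nhds.div_atTop (hlin k)
    have h1' : Tendsto (fun ζ : ℝ => 1 - k / (2 * ζ + k)) atTop (nhds (1 - 0)) :=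
      tendsto_const_nhds.sub h0'
    rw [sub_zero] at h1'
    apply h1'.congr'
    filter_upwards [eventually_gt_atTop |k|] with ζ hζ
    have hk1 := neg_abs_le k
    have hk2 := abs_nonneg k
    have hne : (2 * ζ + k) ≠ 0 := ne_of_gt (by linarith)
    field_simp
    ring
  -- R^(2ζ+3) → ∞
  have hP : Tendsto (fun ζ : ℝ => R ^ (2 * ζ + 3)) atTop atTop := by
    have h1' : Tendsto (fun ζ : ℝ => Real.exp (Real.log R * (2 * ζ + 3))) atTop atTop :=
      Real.tendsto_exp_atTop.comp (Tendsto.const_mul_atTop hlogR (hlin 3))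
    exact h1'.congr fun ζ => (Real.rpow_def_of_pos hR0 _).symm
  have hPinv : Tendsto (fun ζ : ℝ => (R ^ (2 * ζ + 3))⁻¹) atTop (nhds 0) :=
    hP.inv_tendsto_atTop
  -- 8ζ³/R^(2ζ+3) → 0
  have hZ : Tendsto (fun ζ : ℝ => 8 * ζ ^ 3 / R ^ (2 * ζ + 3)) atTop (nhds 0) := by
    have hcomp : Tendsto (fun ζ : ℝ =>
        (Real.log R * (2 * ζ + 3)) ^ 3 * Real.exp (-(Real.log R * (2 * ζ + 3))))
        atTop (nhds 0) :=
      (Real.tendsto_pow_mul_exp_neg_atTop_nhds_zero 3).comp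
        (Tendsto.const_mul_atTop hlogR (hlin 3))
    have hpre : Tendsto (fun ζ : ℝ => (2 * ζ / (2 * ζ + 3) * (Real.log R)⁻¹) ^ 3)
        atTop (nhds ((1 * (Real.log R)⁻¹) ^ 3)) :=
      ((hA 3).mul tendsto_const_nhds).pow 3
    have hmul := hpre.mul hcomp
    rw [mul_zero] at hmul
    apply hmul.congr'
    filter_upwards [eventually_ge_atTop 1] with ζ hζ
    have hne : (2 * ζ + 3 : ℝ) ≠ 0 := by positivity
    rw [Real.rpow_def_of_pos hR0, Real.exp_neg]
    field_simp
    ring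
  -- the J term bound
  obtain ⟨C, hC⟩ := isCompact_Icc.exists_bound_of_continuousOn
    (hg3c.continuousOn : ContinuousOn (deriv (deriv (deriv g))) (Set.Icc 1 R))
  set M : ℝ := max C 0 with hM_def
  have hM0 : 0 ≤ M := le_max_right _ _
  have hMb : ∀ x ∈ Set.Icc (1:ℝ) R, |deriv (deriv (deriv g)) x| ≤ M := by
    intro x hx
    exact le_trans (by simpa using hC x hx) (le_max_left _ _)
  have hJb : ∀ ζ : ℝ, 1 ≤ ζ →
      |∫ r in (1:ℝ)..R, r ^ (2 * ζ + 3) * deriv (deriv (deriv g)) r|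
        ≤ M * R ^ (2 * ζ + 4) / (2 * ζ + 4) := by
    intro ζ hζ
    have hxpos : ∀ x ∈ Set.uIcc (1:ℝ) R, (0:ℝ) < x := by
      intro x hx
      rw [Set.uIcc_of_le hR.le] at hx
      linarith [hx.1]
    have hpcont : ContinuousOn (fun x : ℝ => x ^ (2 * ζ + 3)) (Set.uIcc (1:ℝ) R) :=
      ContinuousOn.rpow_const continuousOn_id (fun x hx => Or.inl (hxpos x hx).ne')
    have hint1 : IntervalIntegrable
        (fun r : ℝ => |r ^ (2 * ζ + 3) * deriv (deriv (deriv g)) r|)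
        MeasureTheory.volume 1 R :=
      ((hpcont.mul hg3c.continuousOn).abs).intervalIntegrable
    have hint2 : IntervalIntegrable (fun r : ℝ => M * r ^ (2 * ζ + 3))
        MeasureTheory.volume 1 R :=
      (continuousOn_const.mul hpcont).intervalIntegrable
    calc |∫ r in (1:ℝ)..R, r ^ (2 * ζ + 3) * deriv (deriv (deriv g)) r|
        ≤ ∫ r in (1:ℝ)..R, |r ^ (2 * ζ + 3) * deriv (deriv (deriv g)) r| :=
          intervalIntegral.abs_integral_le_integral_abs hR.le
      _ ≤ ∫ r in (1:ℝ)..R, M * r ^ (2 * ζ + 3) := by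
          apply intervalIntegral.integral_mono_on hR.le hint1 hint2
          intro x hx
          have hx0 : (0:ℝ) ≤ x := by linarith [hx.1]
          rw [abs_mul, abs_of_nonneg (Real.rpow_nonneg hx0 _), mul_comm]
          exact mul_le_mul_of_nonneg_right (hMb x hx) (Real.rpow_nonneg hx0 _)
      _ = M * ((R ^ (2 * ζ + 3 + 1) - 1) / (2 * ζ + 3 + 1)) := by
          rw [intervalIntegral.integral_const_mul, integral_rpow (Or.inl (by linarith)),
            Real.one_rpow]
      _ ≤ M * R ^ (2 * ζ + 4) / (2 * ζ + 4) := by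
          rw [show (2 * ζ + 3 + 1 : ℝ) = 2 * ζ + 4 by ring, mul_div_assoc]
          gcongr
          · linarith
  -- J/(c P) → 0
  have hJP : Tendsto (fun ζ : ℝ =>
      (∫ r in (1:ℝ)..R, r ^ (2 * ζ + 3) * deriv (deriv (deriv g)) r) /
        (deriv (deriv g) R * R ^ (2 * ζ + 3))) atTop (nhds 0) := by
    apply squeeze_zero_norm'
      (a := fun ζ : ℝ => M * R / ((2 * ζ + 4) * |deriv (deriv g) R|))
    · filter_upwards [eventually_ge_atTop 1] with ζ hζ
      have hd : (2 * ζ + 4 : ℝ) ≠ 0 := by positivity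
      have hcne : |deriv (deriv g) R| ≠ 0 := abs_ne_zero.mpr h2
      rw [Real.norm_eq_abs, abs_div, abs_mul, abs_of_pos (hPpos ζ)]
      calc |∫ r in (1:ℝ)..R, r ^ (2 * ζ + 3) * deriv (deriv (deriv g)) r| /
            (|deriv (deriv g) R| * R ^ (2 * ζ + 3))
          ≤ (M * R ^ (2 * ζ + 4) / (2 * ζ + 4)) /
            (|deriv (deriv g) R| * R ^ (2 * ζ + 3)) := by
            gcongr
            · exact hJb ζ hζ
        _ = M * R / ((2 * ζ + 4) * |deriv (deriv g) R|) := by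
            rw [show (2 * ζ + 4 : ℝ) = 2 * ζ + 3 + 1 by ring,
              Real.rpow_add hR0, Real.rpow_one]
            have hPne := (hPpos ζ).ne'
            field_simp
    · exact tendsto_const_nhds.div_atTop
        ((hlin 4).atTop_mul_const (abs_pos.mpr h2))
  -- g''(1)/(c P) → 0
  have hG2P : Tendsto (fun ζ : ℝ =>
      deriv (deriv g) 1 / (deriv (deriv g) R * R ^ (2 * ζ + 3))) atTop (nhds 0) := by
    have h := (tendsto_const_nhds (x := deriv (deriv g) 1 / deriv (deriv g) R)
      (f := atTop)).mul hPinv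
    rw [mul_zero] at h
    apply h.congr
    intro ζ
    rw [← div_eq_mul_inv, div_div]
  -- the lower-order boundary terms
  have hB : Tendsto (fun ζ : ℝ =>
      (deriv g 1 / ((2 * ζ + 1) * (2 * ζ + 2)) - g 1 / (2 * ζ + 1)) /
        deriv (deriv g) R) atTop (nhds 0) := by
    have hb1 : Tendsto (fun ζ : ℝ => deriv g 1 / ((2 * ζ + 1) * (2 * ζ + 2)))
        atTop (nhds 0) :=
      tendsto_const_nhds.div_atTop ((hlin 1).atTop_mul_atTop₀ (hlin 2))
    have hb2 : Tendsto (fun ζ : ℝ => g 1 / (2 * ζ + 1)) atTop (nhds 0) :=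
      tendsto_const_nhds.div_atTop (hlin 1)
    have := (hb1.sub hb2).div_const (deriv (deriv g) R)
    simpa using this
  -- assemble φ
  have hφ : Tendsto (fun ζ : ℝ =>
      (2 * ζ / (2 * ζ + 1)) * ((2 * ζ / (2 * ζ + 2)) * ((2 * ζ / (2 * ζ + 3)) *
        (1 - (deriv (deriv g) 1 / (deriv (deriv g) R * R ^ (2 * ζ + 3)) +
          (∫ r in (1:ℝ)..R, r ^ (2 * ζ + 3) * deriv (deriv (deriv g)) r) /
            (deriv (deriv g) R * R ^ (2 * ζ + 3))))))
      + (8 * ζ ^ 3 / R ^ (2 * ζ + 3)) *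
          ((deriv g 1 / ((2 * ζ + 1) * (2 * ζ + 2)) - g 1 / (2 * ζ + 1)) /
            deriv (deriv g) R)) atTop
      (nhds (1 * (1 * (1 * (1 - (0 + 0)))) + 0 * 0)) :=
    ((hA 1).mul ((hA 2).mul ((hA 3).mul
      (tendsto_const_nhds.sub (hG2P.add hJP))))).add (hZ.mul hB)
  have hval : (1 * (1 * (1 * (1 - (0 + 0)))) + 0 * 0 : ℝ) = 1 := by norm_num
  rw [hval] at hφ
  apply Tendsto.congr' _ hφ
  filter_upwards [eventually_ge_atTop 1] with ζ hζ
  have hu1 : (2 * ζ + 1 : ℝ) ≠ 0 := by positivity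
  have hu2 : (2 * ζ + 2 : ℝ) ≠ 0 := by positivity
  have hu3 : (2 * ζ + 3 : ℝ) ≠ 0 := by positivity
  have hz : (ζ : ℝ) ≠ 0 := by positivity
  have hPne : (R ^ (2 * ζ + 3) : ℝ) ≠ 0 := (hPpos ζ).ne'
  rw [ibp_aux R hR (2 * ζ) (2 * ζ + 1) (by ring) hu1 g hg',
    ibp_aux R hR (2 * ζ + 1) (2 * ζ + 2) (by ring) hu2 (deriv g) hg1,
    ibp_aux R hR (2 * ζ + 2) (2 * ζ + 3) (by ring) hu3 (deriv (deriv g)) hg2,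
    h0, h1]
  field_simp
  ring
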